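/- Supraclassicality fails in CC/TT: for distinct atoms p, q, the inference p ∧ ¬p ⊨cl q is classically valid, but there is a trivalent valuation v with v((p ∧ ¬p) →cc q) = 0; hence (p ∧ ¬p) →cc q is not a CC/TT theorem. -/
import Mathlib


/-- Trivalent truth values: 0, 1/2, 1. -/
inductive V : Type
  | zero
  | half
  | one
deriving DecidableEq, Repr

open V

/-- Strong Kleene negation. -/
def vneg : V → V
  | zero => one
  | half => half
  | one => zero

/-- Strong Kleene conjunction (minimum). -/
def vmin : V → V → V
  | one, b => b
  | half, one => half
  | half, half => half
  | half, zero => zero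
  | zero, _ => zero

/-- Strong Kleene disjunction (maximum). -/
def vmax : V → V → V
  | zero, b => b
  | half, zero => half
  | half, half => half
  | half, one => one
  | one, _ => one

/-- de Finetti conditional. -/
def df : V → V → V
  | one, c => c
  | _, _ => half

/-- Cooper–Cantwell conditional. -/
def cc : V → V → V
  | zero, _ => half
  | _, c => c

/-- Cooper's quasi-conjunction. -/
def qand : V → V → V
  | zero, _ => zero
  | _, zero => zero
  | one, _ => one
  | _, one => one
  | half, half => half

/-- Cooper's quasi-disjunction. -/
def qor : V → V → V
  | one, _ => one
  | _, one => one
  | zero, _ => zero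
  | _, zero => zero
  | half, half => half

/-- "value ≥ 1/2", i.e. designated / tolerantly true. -/
def des (x : V) : Prop := x ≠ V.zero

/-- Formulas with negation, conjunction, disjunction and the Cooper–Cantwell
indicative conditional. -/
inductive Form : Type
  | atom : ℕ → Form
  | neg : Form → Form
  | and : Form → Form → Form
  | or : Form → Form → Form
  | cond : Form → Form → Form
deriving DecidableEq

/-- Trivalent CC valuation of formulas, extending a valuation of atoms. -/
def val (v : ℕ → V) : Form → V
  | .atom n => v n
  | .neg A => vneg (val v A)
  | .and A B => vmin (val v A) (val v B)
  | .or A B => vmax (val v A) (val v B)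
  | .cond A B => cc (val v A) (val v B)

/-- The Strong Kleene material conditional A ⊃ B := ¬(A ∧ ¬B). -/
def mat (A B : Form) : Form := Form.neg (Form.and A (Form.neg B))

/-- Classical (bivalent) evaluation of formulas. -/
def evalB (w : ℕ → Bool) : Form → Bool
  | .atom n => w n
  | .neg A => !(evalB w A)
  | .and A B => evalB w A && evalB w B
  | .or A B => evalB w A || evalB w B
  | .cond A B => !(evalB w A) || evalB w B

/-- Supraclassicality fails in CC/TT: p ∧ ¬p classically entails q, but
(p ∧ ¬p) →cc q can take value 0, so it is not a CC/TT theorem. -/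
theorem cc_supraclassicality_fails (p q : ℕ) (hpq : p ≠ q) :
    (∀ w : ℕ → Bool,
      evalB w (Form.and (Form.atom p) (Form.neg (Form.atom p))) = true →
      evalB w (Form.atom q) = true) ∧
    (∃ v : ℕ → V,
      val v (Form.cond (Form.and (Form.atom p) (Form.neg (Form.atom p)))
        (Form.atom q)) = V.zero) ∧
    ¬ (∀ v : ℕ → V,
      des (val v (Form.cond (Form.and (Form.atom p) (Form.neg (Form.atom p)))
        (Form.atom q)))) := by
  refine ⟨?_, ?_, ?_⟩
  · intro w h
    simp [evalB] at h
  · refine ⟨fun n => if n = p then V.half else V.zero, ?_⟩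
    simp [val, if_neg (Ne.symm hpq), vneg, vmin, cc]
  · intro h
    have := h (fun n => if n = p then V.half else V.zero)
    simp [val, des, if_neg (Ne.symm hpq), vneg, vmin, cc] at this
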